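/- Let k be a nonnegative integer, n a positive integer with k ≤ n, and 0 < p < 1 with q = 1 - p. Then μ_{n,k}(p) ≥ k + 1 - L(n-1,k,p) = (p·n + k + q - √((p·n - k + q)² + 4·q·k))/2, and (n-k+1)/((n+1)·q) ≤ B_{n,k}(p)/B_{n+1,k}(p) ≤ (n - k + L(n,k,p))/((n+1)·q). If in addition k ≤ p·n, then μ_{n,k}(p) ≥ k + q/2 - (1/2)·√(q·(4k+q)) ≥ k - √(q·k). -/

import Mathlib

open Real

/-- Binomial probability `b_{n,k}(p)`. -/
noncomputable def b (n k : ℕ) (p : ℝ) : ℝ :=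
  (n.choose k : ℝ) * p ^ k * (1 - p) ^ (n - k)

/-- Lower tail probability `B_{n,k}(p)`. -/
noncomputable def B (n k : ℕ) (p : ℝ) : ℝ :=
  ∑ j ∈ Finset.range (k + 1), (n.choose j : ℝ) * p ^ j * (1 - p) ^ (n - j)

/-- Partial mean `μ_{n,k}(p)`. -/
noncomputable def mu (n k : ℕ) (p : ℝ) : ℝ :=
  ∑ j ∈ Finset.range (k + 1), (j : ℝ) * b n j p / B n k p

/-- `L(n,k,p)` evaluated at real arguments. -/
noncomputable def L (n k p : ℝ) : ℝ :=
  (k + 1 - p * n + Real.sqrt ((p * n - k + 1) ^ 2 + 4 * (1 - p) * k)) / 2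

/-!
The ratio `r_k = B_{n,k} / b_{n,k}` obeys `r_{k+1} = 1 + r_k (k+1) q / ((n-k) p)`, because
`(k+1) q b_{n,k+1} = (n-k) p b_{n,k}`. `L(n,k,p)` is the larger root of
`X² = (k+1-pn) X + p(n-k)`, and the recursion carries `L(n,k,p)` above `L(n,k+1,p)`; hence
`r_k ≥ L(n,k,p)` by induction on `k`. Since `B_{n+1,k} = B_{n,k} - p b_{n,k}` and
`μ_{n,k} = np - p(n-k) b_{n,k} / B_{n,k}`, the bound `r_k ≥ L` together with the quadratic
equation for `L` gives both the lower bound on `μ_{n,k}` and the upper bound on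
`B_{n,k} / B_{n+1,k}`. The lower bound on that ratio is the geometric-series estimate of
`B_{n,k}` with common ratio `k q / ((n-k+1) p)`.
-/

section
variable {p : ℝ}

lemma b_nonneg (hp0 : 0 ≤ p) (hp1 : p ≤ 1) (n k : ℕ) : 0 ≤ b n k p := by
  have : 0 ≤ 1 - p := sub_nonneg.2 hp1
  unfold b; positivity

lemma B_succ (n k : ℕ) : B n (k + 1) p = B n k p + b n (k + 1) p :=
  Finset.sum_range_succ _ _

lemma B_zero (n : ℕ) : B n 0 p = b n 0 p := by
  simp [B, b]

lemma B_pos (hp0 : 0 < p) (hp1 : p < 1) (n k : ℕ) : 0 < B n k p := by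
  induction k with
  | zero =>
    have : 0 < 1 - p := sub_pos.2 hp1
    rw [B_zero]; simp only [b, Nat.choose_zero_right]; positivity
  | succ k ih => rw [B_succ]; linarith [b_nonneg hp0.le hp1.le n (k + 1)]

lemma b_succ_mul {n k : ℕ} (h : k < n) :
    ((k : ℝ) + 1) * (1 - p) * b n (k + 1) p = ((n : ℝ) - k) * p * b n k p := by
  have hc : (n.choose (k + 1) : ℝ) * ((k : ℝ) + 1) = n.choose k * ((n : ℝ) - k) := by
    rw [← Nat.cast_sub h.le]; exact_mod_cast Nat.choose_succ_right_eq n k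
  have hpow : (1 - p) ^ (n - k) = (1 - p) ^ (n - (k + 1)) * (1 - p) := by
    rw [← pow_succ]; congr 1; omega
  rw [b, b, hpow, pow_succ]
  linear_combination p ^ k * p * (1 - p) ^ (n - (k + 1)) * (1 - p) * hc

lemma b_succ_left {n k : ℕ} (h : k ≤ n + 1) :
    ((n : ℝ) + 1 - k) * b (n + 1) k p = ((n : ℝ) + 1) * (1 - p) * b n k p := by
  rcases h.lt_or_eq with h | rfl
  · have hc : (n.choose k : ℝ) * ((n : ℝ) + 1) = (n + 1).choose k * ((n : ℝ) + 1 - k) := by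
      have := Nat.choose_mul_succ_eq n k
      rw [← Nat.cast_add_one, ← Nat.cast_sub h.le]
      exact_mod_cast this
    have hpow : (1 - p) ^ (n + 1 - k) = (1 - p) ^ (n - k) * (1 - p) := by
      rw [← pow_succ]; congr 1; omega
    rw [b, b, hpow]
    linear_combination -(p ^ k * (1 - p) ^ (n - k) * (1 - p)) * hc
  · simp [b]

lemma b_succ_succ (n k : ℕ) :
    b (n + 1) (k + 1) p = (1 - p) * b n (k + 1) p + p * b n k p := by
  have hq : (1 - p) * b n (k + 1) p = n.choose (k + 1) * p ^ (k + 1) * (1 - p) ^ (n - k) := by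
    rcases lt_or_ge k n with h | h
    · have hpow : (1 - p) ^ (n - k) = (1 - p) ^ (n - (k + 1)) * (1 - p) := by
        rw [← pow_succ]; congr 1; omega
      rw [b, hpow]; ring
    · simp [b, Nat.choose_eq_zero_of_lt (Nat.lt_succ_of_le h)]
  rw [hq, b, b, Nat.choose_succ_succ', Nat.add_sub_add_right]
  push_cast; ring

lemma B_succ_left (n k : ℕ) : B (n + 1) k p = B n k p - p * b n k p := by
  induction k with
  | zero => simp only [B_zero, b]; simp [pow_succ]; ring
  | succ k ih => rw [B_succ, B_succ, ih, b_succ_succ]; ring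

lemma sum_mul_b {n k : ℕ} (h : k ≤ n) :
    ∑ j ∈ Finset.range (k + 1), (j : ℝ) * b n j p
      = n * p * B n k p - p * ((n : ℝ) - k) * b n k p := by
  induction k with
  | zero => simp [B_zero]; ring
  | succ k ih =>
    rw [Finset.sum_range_succ, ih (by omega), B_succ]
    push_cast
    linear_combination b_succ_mul (p := p) h

lemma mu_eq {n k : ℕ} (h : k ≤ n) :
    mu n k p = (n * p * B n k p - p * ((n : ℝ) - k) * b n k p) / B n k p := by
  rw [mu, ← Finset.sum_div, sum_mul_b h]

end

section
variable {x k p t : ℝ}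

lemma L_sq (hk : 0 ≤ k) (hp : p ≤ 1) :
    L x k p ^ 2 = (k + 1 - p * x) * L x k p + p * (x - k) := by
  have hD : 0 ≤ (p * x - k + 1) ^ 2 + 4 * (1 - p) * k := by
    have : 0 ≤ (1 - p) * k := mul_nonneg (sub_nonneg.2 hp) hk
    positivity
  unfold L
  linear_combination Real.sq_sqrt hD / 4

lemma le_L_of_sq_le (h : t ^ 2 ≤ (k + 1 - p * x) * t + p * (x - k)) : t ≤ L x k p := by
  have := Real.abs_le_sqrt (x := 2 * t - (k + 1 - p * x))
    (y := (p * x - k + 1) ^ 2 + 4 * (1 - p) * k) (by linear_combination 4 * h)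
  unfold L
  linarith [le_abs_self (2 * t - (k + 1 - p * x))]

lemma L_le_of_le_sq (hc : k + 1 - p * x ≤ 2 * t)
    (h : (k + 1 - p * x) * t + p * (x - k) ≤ t ^ 2) : L x k p ≤ t := by
  have : √((p * x - k + 1) ^ 2 + 4 * (1 - p) * k) ≤ 2 * t - (k + 1 - p * x) :=
    Real.sqrt_le_iff.2 ⟨by linarith, by linear_combination 4 * h⟩
  unfold L
  linarith

lemma one_le_L (hk : 0 ≤ k) (hp : p ≤ 1) : 1 ≤ L x k p :=
  le_L_of_sq_le (by nlinarith [mul_nonneg hk (sub_nonneg.2 hp)])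

/-- `1` separates the two roots of the quadratic defining `L`, so above `1` the sign of the
quadratic decides the comparison with `L`. -/
lemma L_le_of_one_lt (hk : 0 ≤ k) (hp : p ≤ 1) (ht : 1 < t)
    (h : (k + 1 - p * x) * t + p * (x - k) ≤ t ^ 2) : L x k p ≤ t := by
  refine L_le_of_le_sq ?_ h
  by_contra! hc
  nlinarith [mul_nonneg hk (sub_nonneg.2 hp),
    mul_pos (sub_pos.2 ht) (by linarith : 0 < k - p * x - t)]

lemma L_succ_le (hk : 0 ≤ k) (hp0 : 0 < p) (hp1 : p < 1) (hkx : k < x) :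
    L x (k + 1) p ≤ 1 + (k + 1) * (1 - p) / (L x k p - (k + 1 - p * x)) := by
  have hsq := L_sq (x := x) hk hp1.le
  have hl := one_le_L (x := x) hk hp1.le
  set l := L x k p
  have hu : 0 < l - (k + 1 - p * x) :=
    pos_of_mul_pos_right (a := l) (by nlinarith [mul_pos hp0 (sub_pos.2 hkx)]) (by linarith)
  have hq : 0 < (k + 1) * (1 - p) := by nlinarith
  apply L_le_of_one_lt (by linarith) hp1.le (lt_add_of_pos_right _ (by positivity))
  have key : (1 + (k + 1) * (1 - p) / (l - (k + 1 - p * x))) ^ 2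
      - ((k + 1 + 1 - p * x) * (1 + (k + 1) * (1 - p) / (l - (k + 1 - p * x)))
        + p * (x - (k + 1)))
      = (k + 1) * (1 - p) * (l - p) / (l - (k + 1 - p * x)) ^ 2 := by
    field_simp
    linear_combination -(k + 1) * (1 - p) * hsq
  have : 0 ≤ (k + 1) * (1 - p) * (l - p) / (l - (k + 1 - p * x)) ^ 2 := by
    have : 0 ≤ l - p := by linarith
    positivity
  linarith

lemma add_one_sub_L_sub_one :
    k + 1 - L (x - 1) k p
      = (p * x + k + (1 - p) - √((p * x - k + (1 - p)) ^ 2 + 4 * (1 - p) * k)) / 2 := by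
  rw [L, show p * (x - 1) - k + 1 = p * x - k + (1 - p) by ring]
  ring

lemma L_sub_one_le (hk : 0 ≤ k) (hp : p ≤ 1) (hkx : k ≤ p * x) :
    L (x - 1) k p ≤ (1 + p + √((1 - p) * (4 * k + (1 - p)))) / 2 := by
  have hq : 0 ≤ 1 - p := sub_nonneg.2 hp
  have hR : 0 ≤ (1 - p) * (4 * k + (1 - p)) := by positivity
  have hsq := Real.sq_sqrt hR
  have hqR : 1 - p ≤ √((1 - p) * (4 * k + (1 - p))) :=
    Real.le_sqrt_of_sq_le (by nlinarith)
  apply L_le_of_le_sq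
  · linarith [Real.sqrt_nonneg ((1 - p) * (4 * k + (1 - p)))]
  · nlinarith [mul_le_mul_of_nonneg_left hqR (sub_nonneg.2 hkx)]

lemma sub_sqrt_le {q : ℝ} (hq : 0 ≤ q) (hk : 0 ≤ k) :
    k - √(q * k) ≤ k + q / 2 - √(q * (4 * k + q)) / 2 := by
  have hs := Real.sq_sqrt (mul_nonneg hq hk)
  have : √(q * (4 * k + q)) ≤ q + 2 * √(q * k) :=
    Real.sqrt_le_iff.2 ⟨by positivity, by nlinarith [mul_nonneg hq (Real.sqrt_nonneg (q * k))]⟩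
  linarith

end

section
variable {p : ℝ}

lemma L_mul_b_le_B (hp0 : 0 < p) (hp1 : p < 1) (n k : ℕ) : L n k p * b n k p ≤ B n k p := by
  induction k with
  | zero =>
    have hL : L n (0 : ℕ) p ≤ 1 :=
      L_le_of_le_sq (by push_cast; nlinarith) (le_of_eq (by push_cast; ring))
    rw [B_zero]
    exact mul_le_of_le_one_left (b_nonneg hp0.le hp1.le n 0) hL
  | succ k ih =>
    rcases lt_or_ge k n with hkn | hkn
    · have hk : (0 : ℝ) ≤ k := k.cast_nonneg
      have hkx : (k : ℝ) < n := by exact_mod_cast hkn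
      set l := L n k p
      have hlu : l * (l - (k + 1 - p * n)) = ((n : ℝ) - k) * p := by
        linear_combination L_sq (x := n) hk hp1.le
      have hu : 0 < l - (k + 1 - p * n) := pos_of_mul_pos_right
        (hlu ▸ mul_pos (sub_pos.2 hkx) hp0) (by linarith [one_le_L (x := n) hk hp1.le])
      have hlb : l * b n k p = (k + 1) * (1 - p) / (l - (k + 1 - p * n)) * b n (k + 1) p := by
        field_simp
        linear_combination (b_succ_mul (p := p) hkn).symm + b n k p * hlu
      calc L n ((k + 1 : ℕ) : ℝ) p * b n (k + 1) p
          ≤ (1 + (k + 1) * (1 - p) / (l - (k + 1 - p * n))) * b n (k + 1) p := by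
            push_cast
            exact mul_le_mul_of_nonneg_right (L_succ_le hk hp0 hp1 hkx) (b_nonneg hp0.le hp1.le _ _)
        _ = b n (k + 1) p + l * b n k p := by rw [hlb]; ring
        _ ≤ B n (k + 1) p := by rw [B_succ]; linarith
    · have : b n (k + 1) p = 0 := by simp [b, Nat.choose_eq_zero_of_lt (Nat.lt_succ_of_le hkn)]
      rw [this, mul_zero]
      exact (B_pos hp0 hp1 n (k + 1)).le

lemma mul_B_le_mul_b (hp0 : 0 < p) (hp1 : p < 1) {n k j : ℕ} (hk : k ≤ n) (hj : j ≤ k) :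
    (((n : ℝ) + 1) * p - k) * B n j p ≤ ((n : ℝ) - k + 1) * p * b n j p := by
  induction j with
  | zero =>
    rw [B_zero]
    have : (0 : ℝ) ≤ k * (1 - p) := mul_nonneg k.cast_nonneg (by linarith)
    exact mul_le_mul_of_nonneg_right (by linarith) (b_nonneg hp0.le hp1.le n 0)
  | succ j ih =>
    have hjn : j < n := by omega
    have hjk : (j : ℝ) + 1 ≤ k := by exact_mod_cast hj
    have hnj : (0 : ℝ) < n - j := sub_pos.2 (by exact_mod_cast hjn)
    have hb : 0 ≤ b n (j + 1) p := b_nonneg hp0.le hp1.le n (j + 1)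
    have hcoef : ((n : ℝ) - k + 1) * ((j : ℝ) + 1) ≤ k * ((n : ℝ) - j) := by
      have : (k : ℝ) ≤ n := by exact_mod_cast hk
      nlinarith
    have hstep : ((n : ℝ) - k + 1) * p * b n j p ≤ k * (1 - p) * b n (j + 1) p := by
      refine le_of_mul_le_mul_right ?_ hnj
      have := mul_le_mul_of_nonneg_right hcoef (mul_nonneg (sub_nonneg.2 hp1.le) hb)
      linear_combination this - ((n : ℝ) - k + 1) * b_succ_mul (p := p) hjn
    rw [B_succ]
    linear_combination ih (by omega) + hstep

lemma mul_b_le_mul_B_succ (hp0 : 0 < p) (hp1 : p < 1) (n k : ℕ) :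
    p * ((n : ℝ) + 1) * (1 - p) * b n k p
      ≤ (L n k p + ((n : ℝ) + 1) * p - k - 1) * B (n + 1) k p := by
  have hk : (0 : ℝ) ≤ k := k.cast_nonneg
  have hl : p < L n k p := hp1.trans_le (one_le_L hk hp1.le)
  have hprod : (L n k p + ((n : ℝ) + 1) * p - k - 1) * (L n k p - p)
      = p * ((n : ℝ) + 1) * (1 - p) := by
    linear_combination L_sq (x := n) hk hp1.le
  have hcoef : 0 ≤ L n k p + ((n : ℝ) + 1) * p - k - 1 := by
    refine nonneg_of_mul_nonneg_left (hprod ▸ ?_) (sub_pos.2 hl)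
    have : (0 : ℝ) ≤ n := n.cast_nonneg
    have : 0 < 1 - p := sub_pos.2 hp1
    positivity
  have hB : (L n k p - p) * b n k p ≤ B (n + 1) k p := by
    rw [B_succ_left]; linarith [L_mul_b_le_B hp0 hp1 n k]
  calc p * ((n : ℝ) + 1) * (1 - p) * b n k p
      = (L n k p + ((n : ℝ) + 1) * p - k - 1) * ((L n k p - p) * b n k p) := by
        rw [← hprod]; ring
    _ ≤ _ := mul_le_mul_of_nonneg_left hB hcoef

lemma add_one_sub_L_le_mu (hp0 : 0 < p) (hp1 : p < 1) {n k : ℕ} (hk : k ≤ n) :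
    (k : ℝ) + 1 - L ((n : ℝ) - 1) k p ≤ mu n k p := by
  rw [mu_eq hk, le_div_iff₀ (B_pos hp0 hp1 n k)]
  cases n with
  | zero =>
    obtain rfl : k = 0 := by omega
    have := one_le_L (x := -1) (k := 0) le_rfl hp1.le
    push_cast
    rw [zero_sub]
    nlinarith [B_pos hp0 hp1 0 0]
  | succ m =>
    have := mul_b_le_mul_B_succ hp0 hp1 m k
    push_cast
    rw [add_sub_cancel_right]
    linear_combination this + p * b_succ_left (p := p) hk

lemma le_B_div_B_succ (hp0 : 0 < p) (hp1 : p < 1) {n k : ℕ} (hk : k ≤ n) :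
    ((n : ℝ) - k + 1) / ((n + 1) * (1 - p)) ≤ B n k p / B (n + 1) k p := by
  have : (0 : ℝ) < (n + 1) * (1 - p) := by have := sub_pos.2 hp1; positivity
  rw [div_le_div_iff₀ this (B_pos hp0 hp1 (n + 1) k), B_succ_left]
  linear_combination mul_B_le_mul_b hp0 hp1 hk le_rfl

lemma B_div_B_succ_le (hp0 : 0 < p) (hp1 : p < 1) (n k : ℕ) :
    B n k p / B (n + 1) k p ≤ ((n : ℝ) - k + L n k p) / ((n + 1) * (1 - p)) := by
  have : (0 : ℝ) < (n + 1) * (1 - p) := by have := sub_pos.2 hp1; positivity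
  have h := mul_b_le_mul_B_succ hp0 hp1 n k
  rw [div_le_div_iff₀ (B_pos hp0 hp1 (n + 1) k) this, B_succ_left]
  rw [B_succ_left] at h
  linear_combination h

end

theorem partial_mean_and_ratio_bounds_general
    (k : ℕ) (n : ℕ) (hkn : k ≤ n) (p : ℝ) (hp0 : 0 < p) (hp1 : p < 1) :
    ((k : ℝ) + 1 - L ((n : ℝ) - 1) k p ≤ mu n k p ∧
      (k : ℝ) + 1 - L ((n : ℝ) - 1) k p =
        (p * n + k + (1 - p) -
          Real.sqrt ((p * n - k + (1 - p)) ^ 2 + 4 * (1 - p) * k)) / 2) ∧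
    (((n : ℝ) - k + 1) / ((n + 1) * (1 - p)) ≤ B n k p / B (n + 1) k p ∧
      B n k p / B (n + 1) k p ≤ ((n : ℝ) - k + L n k p) / ((n + 1) * (1 - p))) ∧
    ((k : ℝ) ≤ p * n →
      (k : ℝ) + (1 - p) / 2 - Real.sqrt ((1 - p) * (4 * k + (1 - p))) / 2 ≤ mu n k p ∧
      (k : ℝ) - Real.sqrt ((1 - p) * k) ≤
        (k : ℝ) + (1 - p) / 2 - Real.sqrt ((1 - p) * (4 * k + (1 - p))) / 2) := by
  have hk : (0 : ℝ) ≤ k := k.cast_nonneg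
  have hmu := add_one_sub_L_le_mu hp0 hp1 hkn
  refine ⟨⟨hmu, add_one_sub_L_sub_one⟩,
    ⟨le_B_div_B_succ hp0 hp1 hkn, B_div_B_succ_le hp0 hp1 n k⟩, fun hkpn => ⟨?_, sub_sqrt_le (sub_nonneg.2 hp1.le) hk⟩⟩
  linarith [L_sub_one_le hk hp1.le hkpn]

theorem partial_mean_and_ratio_bounds
    (k : ℕ) (n : ℕ) (hn : 0 < n) (hkn : k ≤ n) (p : ℝ) (hp0 : 0 < p) (hp1 : p < 1) :
    ((k : ℝ) + 1 - L ((n : ℝ) - 1) k p ≤ mu n k p ∧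
      (k : ℝ) + 1 - L ((n : ℝ) - 1) k p =
        (p * n + k + (1 - p) -
          Real.sqrt ((p * n - k + (1 - p)) ^ 2 + 4 * (1 - p) * k)) / 2) ∧
    (((n : ℝ) - k + 1) / ((n + 1) * (1 - p)) ≤ B n k p / B (n + 1) k p ∧
      B n k p / B (n + 1) k p ≤ ((n : ℝ) - k + L n k p) / ((n + 1) * (1 - p))) ∧
    ((k : ℝ) ≤ p * n →
      (k : ℝ) + (1 - p) / 2 - Real.sqrt ((1 - p) * (4 * k + (1 - p))) / 2 ≤ mu n k p ∧
      (k : ℝ) - Real.sqrt ((1 - p) * k) ≤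
        (k : ℝ) + (1 - p) / 2 - Real.sqrt ((1 - p) * (4 * k + (1 - p))) / 2) :=
  partial_mean_and_ratio_bounds_general k n hkn p hp0 hp1
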